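/- In 𝔽₂₃, let A₁ = {(a,0,0,0,0) : a ∈ ℝ} ∪ {(at, t, −at²/2, a²t³/6, at³/3) : a ∈ ℝ, t > 0} and let S₁ be the subsemigroup of (ℝ⁵, ∗) generated by A₁. Let δ_r(x) = (r x₁, r x₂, r² x₃, r³ x₄, r³ x₅) for r > 0. Then: (i) S₁ has nonempty topological interior in ℝ⁵; (ii) δ_r(S₁) = S₁ for every r > 0 (S₁ is a cone); and (iii) S₁ is almost regular, i.e. S₁ ⊆ closure(interior(S₁)). -/

import Mathlib

/-- The group operation of the free Carnot group `𝔽₂₃` of rank 2 and step 3, in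
exponential coordinates of the second kind on `ℝ⁵`. -/
noncomputable def F23mul (x y : Fin 5 → ℝ) : Fin 5 → ℝ :=
  ![x 0 + y 0,
    x 1 + y 1,
    x 2 + y 2 - x 0 * y 1,
    x 3 + y 3 - x 0 * y 2 + x 0 ^ 2 * y 1 / 2,
    x 4 + y 4 + x 0 * x 1 * y 1 + x 0 * y 1 ^ 2 / 2 - x 1 * y 2]

/-- The smallest subset of `α` containing `A` and closed under `mul`
(the subsemigroup generated by `A`). -/
def genSemigroup {α : Type*} (mul : α → α → α) (A : Set α) : Set α :=
  ⋂₀ {S : Set α | A ⊆ S ∧ ∀ x ∈ S, ∀ y ∈ S, mul x y ∈ S}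

/-- The exponential image of the closed horizontal half-space with inner normal `X₂`. -/
noncomputable def A1 : Set (Fin 5 → ℝ) :=
  {p | ∃ a : ℝ, p = ![a, 0, 0, 0, 0]} ∪
  {p | ∃ a t : ℝ, 0 < t ∧
    p = ![a * t, t, -(a * t ^ 2) / 2, a ^ 2 * t ^ 3 / 6, a * t ^ 3 / 3]}

/-- The intrinsic dilations of `𝔽₂₃` in exponential coordinates of the second kind. -/
noncomputable def dil (r : ℝ) (x : Fin 5 → ℝ) : Fin 5 → ℝ :=
  ![r * x 0, r * x 1, r ^ 2 * x 2, r ^ 3 * x 3, r ^ 3 * x 4]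

/-! Left multiplication by `exp(-x₀X₁)` moves a point into the subgroup `{x₀ = 0}`. There the
words `exp(t₁X₂) C(b) C(c) exp(t₂X₂)`, with `C(b) = exp(bX₁) exp(X₂) exp(-bX₁)`, fill an explicit
open region: solving for `b, c, t₁, t₂` only needs a square root, and positivity of `t₁, t₂` is
an open condition. So `S₁` has interior. Dilations are automorphisms preserving `A₁`, so `S₁` is
a cone. If `x ∈ int S₁` and `p ∈ S₁`, then `p δ_r(x) ∈ int S₁` because left translations and
dilations are homeomorphisms preserving `S₁`, and `p δ_r(x) → p` as `r → 0`. -/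

theorem funext_fin_five {β : Type*} {x y : Fin 5 → β} (h0 : x 0 = y 0) (h1 : x 1 = y 1)
    (h2 : x 2 = y 2) (h3 : x 3 = y 3) (h4 : x 4 = y 4) : x = y := by
  funext i; fin_cases i <;> assumption

section genSemigroup

variable {α : Type*} {mul : α → α → α} {A : Set α}

theorem subset_genSemigroup : A ⊆ genSemigroup mul A :=
  Set.subset_sInter fun _ hS => hS.1

theorem genSemigroup_mul_mem {x y : α} (hx : x ∈ genSemigroup mul A)
    (hy : y ∈ genSemigroup mul A) : mul x y ∈ genSemigroup mul A :=
  Set.mem_sInter.2 fun S hS => hS.2 x (Set.mem_sInter.1 hx S hS) y (Set.mem_sInter.1 hy S hS)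

theorem genSemigroup_subset {S : Set α} (hA : A ⊆ S) (hS : ∀ x ∈ S, ∀ y ∈ S, mul x y ∈ S) :
    genSemigroup mul A ⊆ S :=
  Set.sInter_subset_of_mem ⟨hA, hS⟩

theorem mapsTo_genSemigroup {f : α → α} (hf : ∀ x y, f (mul x y) = mul (f x) (f y))
    (hA : Set.MapsTo f A (genSemigroup mul A)) :
    Set.MapsTo f (genSemigroup mul A) (genSemigroup mul A) :=
  genSemigroup_subset (S := f ⁻¹' genSemigroup mul A) hA fun x hx y hy => by
    simpa only [Set.mem_preimage, hf] using genSemigroup_mul_mem hx hy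

end genSemigroup

namespace F23

local infixr:70 " ⋆ " => F23mul

local notation "S₁" => genSemigroup F23mul A1

noncomputable def inv (p : Fin 5 → ℝ) : Fin 5 → ℝ :=
  ![-p 0, -p 1, -p 2 - p 0 * p 1, -p 3 - p 0 * p 2 - p 0 ^ 2 * p 1 / 2,
    -p 4 - p 0 * p 1 ^ 2 / 2 - p 1 * p 2]

theorem inv_mul_cancel_left (p y : Fin 5 → ℝ) : inv p ⋆ p ⋆ y = y := by
  refine funext_fin_five ?_ ?_ ?_ ?_ ?_ <;> simp only [F23mul, inv, Matrix.cons_val] <;> ring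

theorem mul_inv_cancel_left (p y : Fin 5 → ℝ) : p ⋆ inv p ⋆ y = y := by
  refine funext_fin_five ?_ ?_ ?_ ?_ ?_ <;> simp only [F23mul, inv, Matrix.cons_val] <;> ring

theorem mul_zero (p : Fin 5 → ℝ) : p ⋆ 0 = p := by
  refine funext_fin_five ?_ ?_ ?_ ?_ ?_ <;>
    simp only [F23mul, Matrix.cons_val, Pi.zero_apply] <;> ring

theorem continuous_mul : Continuous fun q : (Fin 5 → ℝ) × (Fin 5 → ℝ) => q.1 ⋆ q.2 := by
  unfold F23mul; fun_prop

noncomputable def leftTranslation (p : Fin 5 → ℝ) : (Fin 5 → ℝ) ≃ₜ (Fin 5 → ℝ) where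
  toFun := (p ⋆ ·)
  invFun := (inv p ⋆ ·)
  left_inv := inv_mul_cancel_left p
  right_inv := mul_inv_cancel_left p
  continuous_toFun := continuous_mul.comp (Continuous.prodMk_right p)
  continuous_invFun := continuous_mul.comp (Continuous.prodMk_right (inv p))

theorem dil_mul (r : ℝ) (x y : Fin 5 → ℝ) : dil r (x ⋆ y) = dil r x ⋆ dil r y := by
  refine funext_fin_five ?_ ?_ ?_ ?_ ?_ <;> simp only [F23mul, dil, Matrix.cons_val] <;> ring

theorem dil_dil (r s : ℝ) (x : Fin 5 → ℝ) : dil r (dil s x) = dil (r * s) x := by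
  refine funext_fin_five ?_ ?_ ?_ ?_ ?_ <;> simp only [dil, Matrix.cons_val] <;> ring

theorem dil_one (x : Fin 5 → ℝ) : dil 1 x = x := by
  refine funext_fin_five ?_ ?_ ?_ ?_ ?_ <;> simp only [dil, Matrix.cons_val] <;> ring

theorem dil_zero (x : Fin 5 → ℝ) : dil 0 x = 0 := by
  refine funext_fin_five ?_ ?_ ?_ ?_ ?_ <;> simp only [dil, Matrix.cons_val, Pi.zero_apply] <;> ring

theorem continuous_dil : Continuous fun q : ℝ × (Fin 5 → ℝ) => dil q.1 q.2 := by
  unfold dil; fun_prop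

noncomputable def dilHomeomorph {r : ℝ} (hr : r ≠ 0) : (Fin 5 → ℝ) ≃ₜ (Fin 5 → ℝ) where
  toFun := dil r
  invFun := dil r⁻¹
  left_inv x := by rw [dil_dil, inv_mul_cancel₀ hr, dil_one]
  right_inv x := by rw [dil_dil, mul_inv_cancel₀ hr, dil_one]
  continuous_toFun := continuous_dil.comp (Continuous.prodMk_right r)
  continuous_invFun := continuous_dil.comp (Continuous.prodMk_right r⁻¹)

theorem dil_mem_A1 {r : ℝ} (hr : 0 < r) {x : Fin 5 → ℝ} (hx : x ∈ A1) : dil r x ∈ A1 := by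
  rcases hx with ⟨a, rfl⟩ | ⟨a, t, ht, rfl⟩
  · refine Or.inl ⟨r * a, funext_fin_five ?_ ?_ ?_ ?_ ?_⟩ <;>
      simp only [dil, Matrix.cons_val] <;> ring
  · refine Or.inr ⟨a, r * t, mul_pos hr ht, funext_fin_five ?_ ?_ ?_ ?_ ?_⟩ <;>
      simp only [dil, Matrix.cons_val] <;> ring

theorem mapsTo_dil {r : ℝ} (hr : 0 < r) : Set.MapsTo (dil r) S₁ S₁ :=
  mapsTo_genSemigroup (dil_mul r) fun _ hx => subset_genSemigroup (dil_mem_A1 hr hx)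

theorem dil_image {r : ℝ} (hr : 0 < r) : dil r '' S₁ = S₁ :=
  Set.SurjOn.image_eq_of_mapsTo
    (Set.RightInvOn.surjOn (fun x _ => (dilHomeomorph hr.ne').right_inv x)
      (mapsTo_dil (inv_pos.2 hr)))
    (mapsTo_dil hr)

noncomputable def expX (a : ℝ) : Fin 5 → ℝ := ![a, 0, 0, 0, 0]

noncomputable def expY (t : ℝ) : Fin 5 → ℝ := ![0, t, 0, 0, 0]

theorem expX_mem (a : ℝ) : expX a ∈ S₁ :=
  subset_genSemigroup (Or.inl ⟨a, rfl⟩)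

theorem expY_mem {t : ℝ} (ht : 0 < t) : expY t ∈ S₁ := by
  refine subset_genSemigroup (Or.inr ⟨0, t, ht, funext_fin_five ?_ ?_ ?_ ?_ ?_⟩) <;>
    simp only [expY, Matrix.cons_val] <;> ring

noncomputable def conjY (b : ℝ) : Fin 5 → ℝ := expX b ⋆ expY 1 ⋆ expX (-b)

theorem conjY_mem (b : ℝ) : conjY b ∈ S₁ :=
  genSemigroup_mul_mem (expX_mem b) (genSemigroup_mul_mem (expY_mem one_pos) (expX_mem (-b)))

theorem expY_mul_conjY_mul_conjY_mul_expY {y : Fin 5 → ℝ} (h0 : y 0 = 0) {b c t₁ t₂ : ℝ}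
    (h1 : t₁ + t₂ + 2 = y 1) (h2 : b + c = -y 2) (h3 : b ^ 2 + c ^ 2 = 2 * y 3)
    (h4 : t₁ * y 2 = c - y 4 - y 2 / 2) :
    expY t₁ ⋆ conjY b ⋆ conjY c ⋆ expY t₂ = y := by
  refine funext_fin_five ?_ ?_ ?_ ?_ ?_ <;>
    simp only [F23mul, conjY, expX, expY, Matrix.cons_val]
  · linear_combination -h0
  · linear_combination h1
  · linear_combination -h2
  · linear_combination h3 / 2
  · linear_combination -h4 + (1 / 2 + t₁) * h2

/-- The larger solution `c` of `b + c = -y 2`, `b ^ 2 + c ^ 2 = 2 * y 3`. -/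
noncomputable def wordC (y : Fin 5 → ℝ) : ℝ := (-y 2 + √(4 * y 3 - y 2 ^ 2)) / 2

/-- The parameter `t₁ = (wordC y - y 4 - y 2 / 2) / y 2` must satisfy `0 < t₁ < y 1 - 2`;
the conditions are multiplied out so that they are visibly open. -/
def wordRegion : Set (Fin 5 → ℝ) :=
  {y | y 2 < 0 ∧ 0 < 4 * y 3 - y 2 ^ 2 ∧ wordC y - y 4 - y 2 / 2 < 0 ∧
    (y 1 - 2) * y 2 < wordC y - y 4 - y 2 / 2}

theorem isOpen_wordRegion : IsOpen wordRegion := by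
  have hC : Continuous wordC := by unfold wordC; fun_prop
  refine IsOpen.and ?_ (IsOpen.and ?_ (IsOpen.and ?_ ?_)) <;> apply isOpen_lt <;> fun_prop

theorem mem_genSemigroup_of_mem_wordRegion {y : Fin 5 → ℝ} (hy : y ∈ wordRegion) (h0 : y 0 = 0) :
    y ∈ S₁ := by
  obtain ⟨hy2, hD, hN, hT⟩ := hy
  set t₁ := (wordC y - y 4 - y 2 / 2) / y 2
  have ht₁ : 0 < t₁ := div_pos_of_neg_of_neg hN hy2
  have ht₂ : 0 < y 1 - 2 - t₁ := sub_pos.2 ((div_lt_iff_of_neg hy2).2 hT)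
  have hsqrt : √(4 * y 3 - y 2 ^ 2) ^ 2 = 4 * y 3 - y 2 ^ 2 := Real.sq_sqrt hD.le
  rw [← expY_mul_conjY_mul_conjY_mul_expY h0 (b := -y 2 - wordC y) (c := wordC y)
    (t₁ := t₁) (t₂ := y 1 - 2 - t₁) (by ring) (by ring)
    (by unfold wordC; linear_combination hsqrt / 2) (div_mul_cancel₀ _ hy2.ne)]
  exact genSemigroup_mul_mem (expY_mem ht₁) <| genSemigroup_mul_mem (conjY_mem _) <|
    genSemigroup_mul_mem (conjY_mem _) (expY_mem ht₂)

noncomputable def normalize (x : Fin 5 → ℝ) : Fin 5 → ℝ := expX (-x 0) ⋆ x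

theorem normalize_apply_zero (x : Fin 5 → ℝ) : normalize x 0 = 0 := by
  simp only [normalize, F23mul, expX, Matrix.cons_val]; ring

theorem expX_mul_normalize (x : Fin 5 → ℝ) : expX (x 0) ⋆ normalize x = x := by
  refine funext_fin_five ?_ ?_ ?_ ?_ ?_ <;>
    simp only [normalize, F23mul, expX, Matrix.cons_val] <;> ring

theorem continuous_normalize : Continuous normalize := by
  unfold normalize expX F23mul; fun_prop

theorem normalize_preimage_wordRegion_subset_interior :
    normalize ⁻¹' wordRegion ⊆ interior S₁ := by
  refine interior_maximal (fun x hx => ?_) (isOpen_wordRegion.preimage continuous_normalize)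
  rw [← expX_mul_normalize x]
  exact genSemigroup_mul_mem (expX_mem _)
    (mem_genSemigroup_of_mem_wordRegion hx (normalize_apply_zero x))

theorem interior_nonempty : (interior S₁).Nonempty := by
  -- the word with `b = 0`, `c = 1`, `t₁ = t₂ = 1`
  set p : Fin 5 → ℝ := ![0, 4, -1, 1 / 2, 5 / 2]
  have hp : normalize p = p := by
    refine funext_fin_five ?_ ?_ ?_ ?_ ?_ <;>
      simp only [p, normalize, F23mul, expX, Matrix.cons_val] <;> ring
  refine ⟨p, normalize_preimage_wordRegion_subset_interior ?_⟩
  rw [Set.mem_preimage, hp]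
  simp only [p, wordRegion, wordC, Set.mem_ofPred_eq, Matrix.cons_val]
  norm_num

theorem mapsTo_interior_dil {r : ℝ} (hr : 0 < r) :
    Set.MapsTo (dil r) (interior S₁) (interior S₁) :=
  (dilHomeomorph hr.ne').isOpenMap.mapsTo_interior (mapsTo_dil hr)

theorem mul_mem_interior {p x : Fin 5 → ℝ} (hp : p ∈ S₁) (hx : x ∈ interior S₁) :
    p ⋆ x ∈ interior S₁ :=
  (leftTranslation p).isOpenMap.mapsTo_interior (fun _ hy => genSemigroup_mul_mem hp hy) hx

theorem subset_closure_interior : S₁ ⊆ closure (interior S₁) := by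
  intro p hp
  obtain ⟨x, hx⟩ := interior_nonempty
  have hlim : Filter.Tendsto (fun r => p ⋆ dil r x) (nhdsWithin 0 (Set.Ioi 0)) (nhds p) := by
    have hcont : Continuous fun r => p ⋆ dil r x :=
      continuous_mul.comp (continuous_const.prodMk (continuous_dil.comp (Continuous.prodMk_left x)))
    simpa only [dil_zero, mul_zero] using hcont.continuousWithinAt.tendsto (x := 0) (s := Set.Ioi 0)
  exact mem_closure_of_tendsto hlim <| eventually_nhdsWithin_of_forall fun r hr =>
    mul_mem_interior hp (mapsTo_interior_dil hr hx)

end F23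

/-- In `𝔽₂₃`, the semigroup `S₁` generated by the closed horizontal half-space with
inner normal `X₂` has nonempty interior, is a cone (`δ_r(S₁) = S₁` for `r > 0`), and
is almost regular: `S₁ ⊆ closure (interior S₁)`. -/
theorem F23_semigroup_cone_interior_almost_regular :
    (interior (genSemigroup F23mul A1)).Nonempty ∧
    (∀ r : ℝ, 0 < r → dil r '' genSemigroup F23mul A1 = genSemigroup F23mul A1) ∧
    genSemigroup F23mul A1 ⊆ closure (interior (genSemigroup F23mul A1)) :=
  ⟨F23.interior_nonempty, fun _ hr => F23.dil_image hr, F23.subset_closure_interior⟩
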